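/- Let s and r be independent random variables, exponentially distributed with means Ω_S > 0 and Ω_R > 0 respectively, and let ρ > 0. Then E[1{r ≥ ρ·s}·log₂(1+r)] = (1/ln 2)·[ e^{1/Ω_R}·E₁(1/Ω_R) − (ρΩ_S/(Ω_R+ρΩ_S))·exp((Ω_R+ρΩ_S)/(ρ·Ω_S·Ω_R))·E₁((Ω_R+ρΩ_S)/(ρ·Ω_S·Ω_R)) ]. -/

import Mathlib

/-!
By independence, the expectation is the integral against the law of `r` of
`P(ρ s ≤ y) log₂(1 + y) = (1 - e^{-y/(ρ Ω_S)}) log₂(1 + y)`; against the density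
`e^{-y/Ω_R}/Ω_R` this is a difference of two Laplace transforms of `log(1 + y)`, at
`a = 1/Ω_R` and `a = 1/Ω_R + 1/(ρ Ω_S)`. Integration by parts and the substitution
`t = a(1 + y)` give
`∫₀^∞ log(1 + y) e^{-ay} dy = a⁻¹ ∫₀^∞ e^{-ay}/(1 + y) dy = a⁻¹ e^a E₁(a)`.
-/

open MeasureTheory ProbabilityTheory

/-- The exponential integral function `E₁(x) = ∫_x^∞ e^{-t}/t dt`. -/
noncomputable def expIntE1 (x : ℝ) : ℝ := ∫ t in Set.Ioi x, Real.exp (-t) / t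

/-- The law of an exponentially distributed random variable with mean `Ω`:
the measure on `ℝ` with density `(1/Ω) e^{-x/Ω}` on `[0,∞)` with respect to
Lebesgue measure. -/
noncomputable def expLaw (Ω : ℝ) : Measure ℝ :=
  (volume.restrict (Set.Ici (0 : ℝ))).withDensity
    (fun x => ENNReal.ofReal ((1 / Ω) * Real.exp (-x / Ω)))

open Real Set Filter Topology

lemma setIntegral_Ioi_comp_add_right {E : Type*} [NormedAddCommGroup E] [NormedSpace ℝ E]
    (g : ℝ → E) (a d : ℝ) : ∫ x in Ioi a, g (x + d) = ∫ x in Ioi (a + d), g x := by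
  simpa using (measurePreserving_add_right volume d).setIntegral_preimage_emb
    (measurableEmbedding_addRight d) g (Ioi (a + d))

lemma integral_Ioi_exp_neg_mul_div {a : ℝ} (ha : 0 < a) (c : ℝ) :
    ∫ u in Ioi c, exp (-a * u) / u = expIntE1 (a * c) := by
  have hscale : ∀ u, exp (-a * u) / u = a * (exp (-(a * u)) / (a * u)) := fun u => by
    rw [neg_mul]; field_simp
  simp_rw [hscale]
  rw [integral_const_mul, integral_comp_mul_left_Ioi (fun t => exp (-t) / t) c ha, smul_eq_mul,
    expIntE1, mul_inv_cancel_left₀ ha.ne']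

lemma integral_exp_neg_mul_div_one_add {a : ℝ} (ha : 0 < a) :
    ∫ y in Ioi (0 : ℝ), exp (-a * y) / (1 + y) = exp a * expIntE1 a := by
  have hshift : ∀ y, exp (-a * y) / (1 + y) = exp a * (exp (-a * (y + 1)) / (y + 1)) := fun y => by
    rw [add_comm 1 y, mul_add, mul_one, exp_add, exp_neg a, neg_mul, exp_neg]
    field_simp
  simp_rw [hshift]
  rw [integral_const_mul, setIntegral_Ioi_comp_add_right (fun u => exp (-a * u) / u), zero_add,
    integral_Ioi_exp_neg_mul_div ha, mul_one]

lemma integrableOn_exp_neg_mul_div_one_add {a : ℝ} (ha : 0 < a) :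
    IntegrableOn (fun y => exp (-a * y) / (1 + y)) (Ioi 0) := by
  refine (exp_neg_integrableOn_Ioi 0 ha).mono' ?_ ?_
  · refine ContinuousOn.aestronglyMeasurable ?_ measurableSet_Ioi
    exact ContinuousOn.div (by fun_prop) (by fun_prop) fun y (hy : 0 < y) => by positivity
  · filter_upwards [ae_restrict_mem measurableSet_Ioi] with y (hy : 0 < y)
    rw [norm_div, norm_of_nonneg (exp_pos _).le, norm_of_nonneg (by positivity)]
    exact div_le_self (exp_pos _).le (by linarith)

lemma log_one_add_mul_exp_le {y : ℝ} (hy : 0 ≤ y) (b : ℝ) :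
    log (1 + y) * exp b ≤ y * exp b := by
  gcongr
  linarith [log_le_sub_one_of_pos (show 0 < 1 + y by linarith)]

lemma integrableOn_log_one_add_mul_exp_neg_mul {a : ℝ} (ha : 0 < a) :
    IntegrableOn (fun y => log (1 + y) * exp (-a * y)) (Ioi 0) := by
  have hdom := integrableOn_rpow_mul_exp_neg_mul_rpow (s := 1) (p := 1) (by norm_num) one_pos ha
  simp only [rpow_one] at hdom
  refine hdom.mono' ?_ ?_
  · refine ContinuousOn.aestronglyMeasurable ?_ measurableSet_Ioi
    exact ((by fun_prop : ContinuousOn (fun y : ℝ => 1 + y) _).log fun y (hy : 0 < y) => by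
      positivity).mul (by fun_prop)
  · filter_upwards [ae_restrict_mem measurableSet_Ioi] with y (hy : 0 < y)
    rw [norm_mul, norm_of_nonneg (log_nonneg (by linarith)), norm_of_nonneg (exp_pos _).le]
    exact log_one_add_mul_exp_le hy.le _

lemma tendsto_log_one_add_mul_exp_neg_mul_atTop {a : ℝ} (ha : 0 < a) :
    Tendsto (fun y => log (1 + y) * exp (-a * y)) atTop (𝓝 0) := by
  have hdom := tendsto_rpow_mul_exp_neg_mul_atTop_nhds_zero 1 a ha
  simp only [rpow_one] at hdom
  refine squeeze_zero' ?_ ?_ hdom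
  all_goals filter_upwards [eventually_ge_atTop 0] with y hy
  · exact mul_nonneg (log_nonneg (by linarith)) (exp_pos _).le
  · exact log_one_add_mul_exp_le hy _

lemma integral_log_one_add_mul_exp_neg_mul {a : ℝ} (ha : 0 < a) :
    ∫ y in Ioi (0 : ℝ), log (1 + y) * exp (-a * y) = a⁻¹ * (exp a * expIntE1 a) := by
  have hu : ∀ y ∈ Ioi (0 : ℝ), HasDerivAt (fun y => log (1 + y)) (1 + y)⁻¹ y :=
    fun y (hy : 0 < y) => by simpa using ((hasDerivAt_id y).const_add 1).log (by positivity)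
  have hv : ∀ y ∈ Ioi (0 : ℝ), HasDerivAt (fun y => -a⁻¹ * exp (-a * y)) (exp (-a * y)) y :=
    fun y _ => (((hasDerivAt_id' y).const_mul (-a)).exp.const_mul (-a⁻¹)).congr_deriv (by
      field_simp)
  have hzero : Tendsto (fun y => log (1 + y) * (-a⁻¹ * exp (-a * y))) (𝓝[>] 0) (𝓝 0) := by
    have hcont : ContinuousAt (fun y => log (1 + y) * (-a⁻¹ * exp (-a * y))) 0 :=
      ((continuousAt_const.add continuousAt_id).log (by norm_num)).mul (by fun_prop)
    simpa using hcont.tendsto.mono_left nhdsWithin_le_nhds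
  have hinfty : Tendsto (fun y => log (1 + y) * (-a⁻¹ * exp (-a * y))) atTop (𝓝 0) := by
    simpa [mul_left_comm] using (tendsto_log_one_add_mul_exp_neg_mul_atTop ha).const_mul (-a⁻¹)
  have hu'v : IntegrableOn (fun y => (1 + y)⁻¹ * (-a⁻¹ * exp (-a * y))) (Ioi 0) :=
    IntegrableOn.congr_fun ((integrableOn_exp_neg_mul_div_one_add ha).const_mul (-a⁻¹))
      (fun y _ => by ring) measurableSet_Ioi
  rw [integral_Ioi_mul_deriv_eq_deriv_mul hu hv (integrableOn_log_one_add_mul_exp_neg_mul ha)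
    hu'v hzero hinfty, ← integral_exp_neg_mul_div_one_add ha, ← integral_const_mul, sub_zero,
    zero_sub, ← integral_neg]
  congr 1 with y
  ring

lemma integral_ite_le_mul_eq_integral_cdf_of_indepFun {Ω : Type*} [MeasurableSpace Ω]
    {P : Measure Ω} [IsProbabilityMeasure P] {X Y : Ω → ℝ} (hX : Measurable X) (hY : Measurable Y)
    (hXY : IndepFun X Y P) {ρ : ℝ} (hρ : 0 < ρ) {g : ℝ → ℝ} (hg : Measurable g)
    (hgY : Integrable g (P.map Y)) :
    ∫ ω, (if ρ * X ω ≤ Y ω then g (Y ω) else 0) ∂P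
      = ∫ y, cdf (P.map X) (y / ρ) * g y ∂(P.map Y) := by
  have : IsProbabilityMeasure (P.map X) := Measure.isProbabilityMeasure_map hX.aemeasurable
  set F : ℝ × ℝ → ℝ := fun p => if ρ * p.1 ≤ p.2 then g p.2 else 0
  have hF : Measurable F :=
    Measurable.ite (measurableSet_le (measurable_fst.const_mul ρ) measurable_snd)
      (hg.comp measurable_snd) measurable_const
  have hsection : ∀ y, (fun x => F (x, y)) = (Iic (y / ρ)).indicator fun _ => g y := fun y => by
    ext x
    simp only [F, indicator_apply, mem_Iic, le_div_iff₀' hρ]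
  have hFint : Integrable F ((P.map X).prod (P.map Y)) := by
    rw [← hXY.map_prod_eq_prod_map_map hX.aemeasurable hY.aemeasurable,
      integrable_map_measure hF.aestronglyMeasurable (hX.prodMk hY).aemeasurable]
    refine (hgY.comp_measurable hY).norm.mono' (hF.comp (hX.prodMk hY)).aestronglyMeasurable
      (ae_of_all _ fun ω => ?_)
    simp only [Function.comp_apply, F]
    split_ifs <;> simp
  calc ∫ ω, (if ρ * X ω ≤ Y ω then g (Y ω) else 0) ∂P
      = ∫ p, F p ∂((P.map X).prod (P.map Y)) := by
        rw [← hXY.map_prod_eq_prod_map_map hX.aemeasurable hY.aemeasurable,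
          integral_map (hX.prodMk hY).aemeasurable hF.aestronglyMeasurable]
    _ = ∫ y, ∫ x, F (x, y) ∂(P.map X) ∂(P.map Y) := integral_prod_symm F hFint
    _ = ∫ y, cdf (P.map X) (y / ρ) * g y ∂(P.map Y) := by
        simp_rw [hsection, integral_indicator_const _ measurableSet_Iic, smul_eq_mul, cdf_eq_real]

lemma expLaw_eq_expMeasure (Ω : ℝ) : expLaw Ω = expMeasure Ω⁻¹ := by
  rw [expLaw, expMeasure, gammaMeasure, ← withDensity_indicator measurableSet_Ici]
  congr 1 with x
  rw [show gammaPDF 1 Ω⁻¹ x = exponentialPDF Ω⁻¹ x from rfl, exponentialPDF_eq]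
  by_cases hx : 0 ≤ x
  · simp only [indicator_apply, mem_Ici, hx, if_true]
    ring_nf
  · simp [hx]

lemma cdf_expLaw {Ω : ℝ} (hΩ : 0 < Ω) {x : ℝ} (hx : 0 ≤ x) :
    cdf (expLaw Ω) x = 1 - exp (-Ω⁻¹ * x) := by
  rw [expLaw_eq_expMeasure, cdf_expMeasure_eq (inv_pos.2 hΩ), if_pos hx, neg_mul]

lemma ae_nonneg_expLaw (Ω : ℝ) : ∀ᵐ y ∂expLaw Ω, 0 ≤ y :=
  (withDensity_absolutelyContinuous _ _).ae_le (ae_restrict_mem measurableSet_Ici)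

lemma toReal_ofReal_expLaw_density {Ω : ℝ} (hΩ : 0 < Ω) (x : ℝ) :
    (ENNReal.ofReal ((1 / Ω) * exp (-x / Ω))).toReal = Ω⁻¹ * exp (-Ω⁻¹ * x) := by
  rw [ENNReal.toReal_ofReal (by positivity)]
  ring_nf

lemma integral_expLaw {Ω : ℝ} (hΩ : 0 < Ω) (h : ℝ → ℝ) :
    ∫ y, h y ∂expLaw Ω = Ω⁻¹ * ∫ y in Ioi 0, h y * exp (-Ω⁻¹ * y) := by
  rw [expLaw, integral_withDensity_eq_integral_toReal_smul (by fun_prop)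
    (ae_of_all _ fun _ => ENNReal.ofReal_lt_top), integral_Ici_eq_integral_Ioi,
    ← integral_const_mul]
  congr 1 with y
  rw [toReal_ofReal_expLaw_density hΩ, smul_eq_mul]
  ring

lemma integrable_expLaw_iff {Ω : ℝ} (hΩ : 0 < Ω) (h : ℝ → ℝ) :
    Integrable h (expLaw Ω) ↔ IntegrableOn (fun y => h y * exp (-Ω⁻¹ * y)) (Ioi 0) := by
  rw [expLaw,
    integrable_withDensity_iff (by fun_prop) (ae_of_all _ fun _ => ENNReal.ofReal_lt_top),
    ← integrableOn_Ici_iff_integrableOn_Ioi, IntegrableOn,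
    ← integrable_const_mul_iff (inv_pos.2 hΩ).ne'.isUnit (fun y => h y * exp (-Ω⁻¹ * y))]
  simp_rw [toReal_ofReal_expLaw_density hΩ, mul_left_comm]

lemma integrable_log_one_add_mul_exp_neg_mul_expLaw {Ω c : ℝ} (hΩ : 0 < Ω) (hc : 0 ≤ c) :
    Integrable (fun y => log (1 + y) * exp (-c * y)) (expLaw Ω) := by
  rw [integrable_expLaw_iff hΩ]
  refine (integrableOn_log_one_add_mul_exp_neg_mul (a := Ω⁻¹ + c) (by positivity)).congr_fun
    (fun y _ => ?_) measurableSet_Ioi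
  rw [mul_assoc, ← exp_add]
  ring_nf

lemma integral_log_one_add_mul_exp_neg_mul_expLaw {Ω c : ℝ} (hΩ : 0 < Ω) (hc : 0 ≤ c) :
    ∫ y, log (1 + y) * exp (-c * y) ∂expLaw Ω
      = Ω⁻¹ * (Ω⁻¹ + c)⁻¹ * (exp (Ω⁻¹ + c) * expIntE1 (Ω⁻¹ + c)) := by
  have hexp : ∀ y, log (1 + y) * exp (-c * y) * exp (-Ω⁻¹ * y)
      = log (1 + y) * exp (-(Ω⁻¹ + c) * y) := fun y => by
    rw [mul_assoc, ← exp_add]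
    ring_nf
  simp_rw [integral_expLaw hΩ, hexp]
  rw [integral_log_one_add_mul_exp_neg_mul (by positivity), mul_assoc]

/-- For independent exponential SNRs `s`, `r` with means `Ω_S`, `Ω_R` and
threshold `ρ > 0`, the throughput of buffer-aided relaying with adaptive link
selection and decision function `F(x) = x` is
`E[1{r ≥ ρs} log₂(1+r)] = (1/ln 2)[e^{1/Ω_R} E₁(1/Ω_R)
− (ρΩ_S/(Ω_R+ρΩ_S)) e^{(Ω_R+ρΩ_S)/(ρΩ_SΩ_R)} E₁((Ω_R+ρΩ_S)/(ρΩ_SΩ_R))]`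
(equation (20) of the paper at `ρ = ρ_opt`). -/
theorem throughput_rayleigh
    {Ω : Type*} [MeasurableSpace Ω] (P : Measure Ω) [IsProbabilityMeasure P]
    (s r : Ω → ℝ) (hs : Measurable s) (hr : Measurable r)
    (ΩS ΩR : ℝ) (hΩS : 0 < ΩS) (hΩR : 0 < ΩR)
    (hlaws : P.map s = expLaw ΩS) (hlawr : P.map r = expLaw ΩR)
    (hindep : IndepFun s r P) (ρ : ℝ) (hρ : 0 < ρ) :
    ∫ ω, (if ρ * s ω ≤ r ω then Real.logb 2 (1 + r ω) else 0) ∂P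
      = (1 / Real.log 2)
          * (Real.exp (1 / ΩR) * expIntE1 (1 / ΩR)
              - (ρ * ΩS / (ΩR + ρ * ΩS))
                  * Real.exp ((ΩR + ρ * ΩS) / (ρ * ΩS * ΩR))
                  * expIntE1 ((ΩR + ρ * ΩS) / (ρ * ΩS * ΩR))) := by
  have hc : 0 ≤ (ρ * ΩS)⁻¹ := by positivity
  have hlogb : ∀ y, logb 2 (1 + y) = log (1 + y) * exp (-0 * y) / log 2 := by simp [logb]
  have hintegrand : ∀ᵐ y ∂expLaw ΩR, cdf (expLaw ΩS) (y / ρ) * logb 2 (1 + y)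
      = (log (1 + y) * exp (-0 * y) - log (1 + y) * exp (-(ρ * ΩS)⁻¹ * y)) / log 2 := by
    filter_upwards [ae_nonneg_expLaw ΩR] with y hy
    rw [cdf_expLaw hΩS (div_nonneg hy hρ.le), logb,
      show -ΩS⁻¹ * (y / ρ) = -(ρ * ΩS)⁻¹ * y by field_simp, neg_zero, zero_mul, exp_zero]
    ring
  have hlogb_int : Integrable (fun y => logb 2 (1 + y)) (P.map r) := by
    simpa only [hlawr, hlogb] using
      (integrable_log_one_add_mul_exp_neg_mul_expLaw hΩR le_rfl).div_const (log 2)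
  have hlogb_meas : Measurable fun y => logb 2 (1 + y) := by unfold logb; fun_prop
  rw [integral_ite_le_mul_eq_integral_cdf_of_indepFun hs hr hindep hρ hlogb_meas hlogb_int, hlaws,
    hlawr, integral_congr_ae hintegrand, integral_div,
    integral_sub (integrable_log_one_add_mul_exp_neg_mul_expLaw hΩR le_rfl)
      (integrable_log_one_add_mul_exp_neg_mul_expLaw hΩR hc),
    integral_log_one_add_mul_exp_neg_mul_expLaw hΩR le_rfl,
    integral_log_one_add_mul_exp_neg_mul_expLaw hΩR hc,
    show ΩR⁻¹ + (ρ * ΩS)⁻¹ = (ΩR + ρ * ΩS) / (ρ * ΩS * ΩR) by field_simp; ring]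
  simp only [add_zero, ← one_div]
  field_simp
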